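/- arXiv:0804.4012 — 4 statements merged into one kernel-verified Lean document; each statement's English description precedes it below -/
import Mathlib

section
/- Let X be a compact metric space and let F be a nonempty family of continuous real-valued functions on X such that -f ∈ F whenever f ∈ F. For a finite Borel measure μ on X define Φ(μ) = sup_{f ∈ F} ∫ f dμ ∈ [0, ∞]. If the only finite Borel measure μ on X satisfying ∫ f dμ = 0 for every f ∈ F is the zero measure, then there exists a constant c < ∞ such that μ(X) ≤ c · Φ(μ) for every finite Borel measure μ on X. -/
/-!
Since `Φ(c • μ) = c * Φ(μ)`, it suffices to bound `Φ` from below by a positive constant on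
probability measures. There `Φ` is a supremum of weak-* continuous functions, hence lower
semicontinuous, and it does not vanish: `Φ(ν) = 0` forces `∫ f dν ≤ 0` for all `f ∈ F`, hence
`∫ f dν = 0` because `F` is symmetric, so `ν = 0`. The space of probability measures on a compact
space is compact, so `Φ` attains a positive minimum on it.
-/

open MeasureTheory Filter
open scoped ENNReal NNReal Topology

/-- The abstract "total first variation": `Φ(μ) = sup_{f ∈ F} ∫ f dμ ∈ [0, ∞]`,
for a family `F` of continuous functions closed under negation (so the sup is
nonnegative, and taking `ENNReal.ofReal` of each integral does not change it). -/
noncomputable def Phi {X : Type*} [TopologicalSpace X] [MeasurableSpace X]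
    (F : Set C(X, ℝ)) (μ : Measure X) : ℝ≥0∞ :=
  ⨆ f ∈ F, ENNReal.ofReal (∫ x, f x ∂μ)

open Set

section Phi

variable {X : Type*} [TopologicalSpace X] [MeasurableSpace X] {F : Set C(X, ℝ)}

lemma Phi_smul_measure (μ : Measure X) {c : ℝ≥0∞} (hc : c ≠ ∞) :
    Phi F (c • μ) = c * Phi F μ := by
  simp only [Phi, integral_smul_measure, smul_eq_mul, ENNReal.mul_iSup,
    ENNReal.ofReal_mul ENNReal.toReal_nonneg, ENNReal.ofReal_toReal hc]

lemma Phi_eq_measure_univ_mul (μ : Measure X) [IsFiniteMeasure μ] [NeZero μ] :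
    Phi F μ = μ univ * Phi F ((μ univ)⁻¹ • μ) := by
  conv_lhs => rw [← one_smul ℝ≥0∞ μ, ← ENNReal.mul_inv_cancel (NeZero.ne (μ univ))
    (measure_ne_top μ univ), ← smul_smul]
  exact Phi_smul_measure _ (measure_ne_top μ univ)

lemma integral_eq_zero_of_Phi_eq_zero (hFneg : ∀ f ∈ F, -f ∈ F) {μ : Measure X}
    (hμ : Phi F μ = 0) {f : C(X, ℝ)} (hf : f ∈ F) : ∫ x, f x ∂μ = 0 := by
  have integral_nonpos : ∀ g ∈ F, ∫ x, g x ∂μ ≤ 0 := fun g hg =>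
    ENNReal.ofReal_eq_zero.1 <| nonpos_iff_eq_zero.1 <| hμ ▸ le_iSup₂ (α := ℝ≥0∞) g hg
  have := integral_nonpos (-f) (hFneg f hf)
  simp only [ContinuousMap.neg_apply, integral_neg, neg_nonpos] at this
  exact le_antisymm (integral_nonpos f hf) this

lemma lowerSemicontinuous_Phi [CompactSpace X] [OpensMeasurableSpace X] (F : Set C(X, ℝ)) :
    LowerSemicontinuous fun ν : ProbabilityMeasure X => Phi F ν :=
  lowerSemicontinuous_biSup fun f _ =>
    (ENNReal.continuous_ofReal.comp
      (ProbabilityMeasure.continuous_integral_continuousMap f)).lowerSemicontinuous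

end Phi

lemma LowerSemicontinuous.exists_pos_le_of_pos {α : Type*} [TopologicalSpace α] [CompactSpace α]
    {g : α → ℝ≥0∞} (hg : LowerSemicontinuous g) (hpos : ∀ a, 0 < g a) :
    ∃ m : ℝ≥0, 0 < m ∧ ∀ a, (m : ℝ≥0∞) ≤ g a := by
  cases isEmpty_or_nonempty α
  · exact ⟨1, one_pos, isEmptyElim⟩
  obtain ⟨a₀, -, ha₀⟩ :=
    (hg.lowerSemicontinuousOn univ).exists_isMinOn univ_nonempty isCompact_univ
  have min_ne_top : min (g a₀) 1 ≠ ∞ := (min_lt_of_right_lt ENNReal.one_lt_top).ne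
  refine ⟨(min (g a₀) 1).toNNReal, ?_, fun a => ?_⟩
  · exact ENNReal.toNNReal_pos (lt_min (hpos a₀) one_pos).ne' min_ne_top
  · rw [ENNReal.coe_toNNReal min_ne_top]
    exact (min_le_left _ _).trans (ha₀ (mem_univ a))

theorem stmt_0_general {X : Type*} [MetricSpace X] [CompactSpace X]
    [MeasurableSpace X] [BorelSpace X]
    (F : Set C(X, ℝ)) (hFneg : ∀ f ∈ F, -f ∈ F)
    (hzero : ∀ μ : Measure X, IsFiniteMeasure μ →
      (∀ f ∈ F, ∫ x, f x ∂μ = 0) → μ = 0) :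
    ∃ c : ℝ≥0, ∀ μ : Measure X, IsFiniteMeasure μ →
      μ Set.univ ≤ (c : ℝ≥0∞) * Phi F μ := by
  have Phi_pos : ∀ ν : ProbabilityMeasure X, 0 < Phi F ν := fun ν =>
    pos_iff_ne_zero.2 fun hν => IsProbabilityMeasure.ne_zero (ν : Measure X) <|
      hzero ν inferInstance fun f hf => integral_eq_zero_of_Phi_eq_zero hFneg hν hf
  obtain ⟨m, hm, hmν⟩ := (lowerSemicontinuous_Phi F).exists_pos_le_of_pos Phi_pos
  refine ⟨m⁻¹, fun μ _ => ?_⟩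
  rcases eq_zero_or_neZero μ with rfl | _
  · simp
  have one_le_inv_mul_Phi : 1 ≤ ((m⁻¹ : ℝ≥0) : ℝ≥0∞) * Phi F ((μ univ)⁻¹ • μ) := by
    calc (1 : ℝ≥0∞) = ((m⁻¹ : ℝ≥0) : ℝ≥0∞) * m := by
          rw [← ENNReal.coe_mul, inv_mul_cancel₀ hm.ne', ENNReal.coe_one]
      _ ≤ _ := by gcongr; exact hmν ⟨_, inferInstance⟩
  calc μ univ ≤ μ univ * (((m⁻¹ : ℝ≥0) : ℝ≥0∞) * Phi F ((μ univ)⁻¹ • μ)) :=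
        le_mul_of_one_le_right' one_le_inv_mul_Phi
    _ = ((m⁻¹ : ℝ≥0) : ℝ≥0∞) * Phi F μ := by rw [Phi_eq_measure_univ_mul μ]; ring

theorem stmt_0 {X : Type*} [MetricSpace X] [CompactSpace X]
    [MeasurableSpace X] [BorelSpace X]
    (F : Set C(X, ℝ)) (hF : F.Nonempty) (hFneg : ∀ f ∈ F, -f ∈ F)
    (hzero : ∀ μ : Measure X, IsFiniteMeasure μ →
      (∀ f ∈ F, ∫ x, f x ∂μ = 0) → μ = 0) :
    ∃ c : ℝ≥0, ∀ μ : Measure X, IsFiniteMeasure μ →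
      μ Set.univ ≤ (c : ℝ≥0∞) * Phi F μ :=
  stmt_0_general F hFneg hzero
end

section
/- Let X be a compact metric space and let F be a nonempty family of continuous real-valued functions on X such that -f ∈ F whenever f ∈ F. For a finite Borel measure μ on X define Φ(μ) = sup_{f ∈ F} ∫ f dμ ∈ [0, ∞]. For each nonempty compact subset K of X define c_K = sup { μ(X) : μ a finite Borel measure on X whose support is contained in K and with Φ(μ) ≤ 1 } ∈ [0, ∞]. Then K ↦ c_K is upper semicontinuous with respect to the Hausdorff distance: if nonempty compact sets K_i converge to a nonempty compact set K in the Hausdorff metric, then limsup_i c_{K_i} ≤ c_K. -/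
open MeasureTheory Filter
open scoped ENNReal NNReal Topology

/-- `c_K`: the best isoperimetric constant among finite Borel measures supported
in the compact set `K` (the support condition is expressed as `μ Kᶜ = 0`). -/
noncomputable def bestConst {X : Type*} [TopologicalSpace X] [MeasurableSpace X]
    (F : Set C(X, ℝ)) (K : Set X) : ℝ≥0∞ :=
  sSup {m : ℝ≥0∞ | ∃ μ : Measure X, IsFiniteMeasure μ ∧ μ Kᶜ = 0 ∧
    Phi F μ ≤ 1 ∧ μ Set.univ = m}


/-!
If `r < c_{K_i}` for infinitely many `i`, rescale admissible measures on those `K_i` to have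
mass exactly `r`. Finite measures of mass at most `r` on a compact space form a weakly compact
set, so along an ultrafilter they converge weakly to some `μ` of mass `r`. The constraints
`∫ f dν_i ≤ 1` pass to the weak limit, and `∫ dist(·, K₀) dν_i ≤ d_H(K_i, K₀) · r → 0` forces
`μ` to be carried by the closed set `K₀`. Hence `r ≤ c_{K₀}`.
-/

open Metric Set

section Phi

variable {X : Type*} [TopologicalSpace X] [MeasurableSpace X] {F : Set C(X, ℝ)}

lemma phi_le_one_iff {μ : Measure X} : Phi F μ ≤ 1 ↔ ∀ f ∈ F, ∫ x, f x ∂μ ≤ 1 := by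
  simp only [Phi, iSup₂_le_iff, ENNReal.ofReal_le_one]

lemma phi_smul (c : ℝ≥0) (μ : Measure X) : Phi F (c • μ) = c * Phi F μ := by
  simp only [Phi, integral_smul_nnreal_measure, ENNReal.mul_iSup, NNReal.smul_def, smul_eq_mul,
    ENNReal.ofReal_mul c.coe_nonneg, ENNReal.ofReal_coe_nnreal]

lemma measure_univ_le_bestConst {K : Set X} (μ : Measure X) [IsFiniteMeasure μ]
    (hK : μ Kᶜ = 0) (hΦ : Phi F μ ≤ 1) : μ univ ≤ bestConst F K :=
  le_sSup ⟨μ, inferInstance, hK, hΦ, rfl⟩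

lemma exists_finiteMeasure_mass_eq_of_lt_bestConst {K : Set X} {r : ℝ≥0}
    (hr : (r : ℝ≥0∞) < bestConst F K) :
    ∃ ν : FiniteMeasure X, ν.mass = r ∧ (ν : Measure X) Kᶜ = 0 ∧ Phi F ν ≤ 1 := by
  obtain ⟨-, ⟨μ, hfin, hK, hΦ, rfl⟩, hrμ⟩ := lt_sSup_iff.1 hr
  set m : ℝ≥0 := (μ univ).toNNReal
  have hm : (m : ℝ≥0∞) = μ univ := ENNReal.coe_toNNReal (measure_ne_top μ univ)
  have hrm : r < m := by exact_mod_cast hm ▸ hrμ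
  let ν : FiniteMeasure X := ⟨(r / m) • μ, inferInstance⟩
  have hν : (ν : Measure X) = (r / m) • μ := rfl
  refine ⟨ν, ENNReal.coe_injective ?_, by simp [hν, hK], ?_⟩
  · rw [FiniteMeasure.ennreal_mass, hν, Measure.smul_apply, ← hm, ENNReal.smul_def, smul_eq_mul,
      ← ENNReal.coe_mul, div_mul_cancel₀ r (pos_of_gt hrm).ne']
  · rw [hν, phi_smul]
    exact mul_le_one' (by exact_mod_cast div_le_one_of_le₀ hrm.le m.coe_nonneg) hΦ

end Phi

section InfDist

variable {X : Type*} [PseudoMetricSpace X] [MeasurableSpace X]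

lemma integral_infDist_le_hausdorffDist_mul {K K₀ : Set X} (μ : Measure X) [IsFiniteMeasure μ]
    (hK : μ Kᶜ = 0) (hfin : hausdorffEDist K K₀ ≠ ∞) :
    ∫ x, infDist x K₀ ∂μ ≤ hausdorffDist K K₀ * μ.real univ := by
  refine (Real.le_norm_self _).trans (norm_integral_le_of_norm_le_const ?_)
  filter_upwards [mem_ae_iff.2 hK] with x hx
  rw [Real.norm_of_nonneg infDist_nonneg]
  exact infDist_le_hausdorffDist_of_mem hx hfin

lemma measure_compl_eq_zero_of_integral_infDist_eq_zero [CompactSpace X] [OpensMeasurableSpace X]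
    {K : Set X} (hK : IsClosed K) (hne : K.Nonempty) (μ : Measure X) [IsFiniteMeasure μ]
    (h : ∫ x, infDist x K ∂μ = 0) : μ Kᶜ = 0 := by
  have hint : Integrable (fun x => infDist x K) μ :=
    (continuous_infDist_pt K).integrable_of_hasCompactSupport (.of_compactSpace _)
  have hae := (integral_eq_zero_iff_of_nonneg (fun _ => infDist_nonneg) hint).1 h
  refine measure_mono_null (fun x hx => ?_) (ae_iff.1 hae)
  exact ((hK.notMem_iff_infDist_pos hne).1 hx).ne'

end InfDist

namespace MeasureTheory.FiniteMeasure

variable {X : Type*} [MeasurableSpace X] {ι : Type*}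

lemma tendsto_integral_of_tendsto [TopologicalSpace X] [CompactSpace X] [OpensMeasurableSpace X]
    {L : Filter ι} {ν : ι → FiniteMeasure X} {μ : FiniteMeasure X} (hμ : Tendsto ν L (𝓝 μ))
    (f : C(X, ℝ)) :
    Tendsto (fun i => ∫ x, f x ∂(ν i : Measure X)) L (𝓝 (∫ x, f x ∂(μ : Measure X))) :=
  tendsto_iff_forall_integral_tendsto.1 hμ (.mkOfCompact f)

lemma exists_tendsto_of_eventually_mass_le [TopologicalSpace X] [T2Space X] [CompactSpace X]
    [BorelSpace X] (𝒰 : Ultrafilter ι) {ν : ι → FiniteMeasure X} {C : ℝ≥0}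
    (h : ∀ᶠ i in 𝒰, (ν i).mass ≤ C) : ∃ μ, Tendsto ν 𝒰 (𝓝 μ) :=
  let ⟨μ, _, hμ⟩ := (isCompact_setOfPred_finiteMeasure_le_of_compactSpace X C).ultrafilter_le_nhds
    (𝒰.map ν) (le_principal_iff.2 h)
  ⟨μ, hμ⟩

lemma measure_compl_eq_zero_of_tendsto_hausdorffDist [PseudoMetricSpace X] [CompactSpace X]
    [OpensMeasurableSpace X] {L : Filter ι} [L.NeBot] {K : ι → Set X} {K₀ : Set X}
    (hKne : ∀ i, (K i).Nonempty) (hK₀ : IsClosed K₀) (hK₀ne : K₀.Nonempty)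
    (hconv : Tendsto (fun i => hausdorffDist (K i) K₀) L (𝓝 0))
    {ν : ι → FiniteMeasure X} {μ : FiniteMeasure X} (hμ : Tendsto ν L (𝓝 μ)) {C : ℝ≥0}
    (hν : ∀ᶠ i in L, (ν i).mass ≤ C ∧ (ν i : Measure X) (K i)ᶜ = 0) :
    (μ : Measure X) K₀ᶜ = 0 := by
  refine measure_compl_eq_zero_of_integral_infDist_eq_zero hK₀ hK₀ne _
    (tendsto_nhds_unique (tendsto_integral_of_tendsto hμ ⟨_, continuous_infDist_pt K₀⟩) ?_)
  have hbound : Tendsto (fun i => hausdorffDist (K i) K₀ * C) L (𝓝 0) := by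
    simpa using hconv.mul_const (C : ℝ)
  refine tendsto_of_tendsto_of_tendsto_of_le_of_le' tendsto_const_nhds hbound
    (.of_forall fun i => integral_nonneg fun _ => infDist_nonneg) ?_
  filter_upwards [hν] with i ⟨hmass, hsupp⟩
  have hfin := hausdorffEDist_ne_top_of_nonempty_of_bounded (hKne i) hK₀ne
    isBounded_of_compactSpace isBounded_of_compactSpace
  refine (integral_infDist_le_hausdorffDist_mul _ hsupp hfin).trans ?_
  gcongr
  · exact hausdorffDist_nonneg
  · rw [measureReal_def, ← ennreal_mass, ENNReal.coe_toReal]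
    exact_mod_cast hmass

end MeasureTheory.FiniteMeasure

theorem stmt_5_general {X : Type*} [MetricSpace X] [CompactSpace X]
    [MeasurableSpace X] [BorelSpace X]
    (F : Set C(X, ℝ))
    (K : ℕ → Set X) (K₀ : Set X)
    (hKne : ∀ i, (K i).Nonempty)
    (hK₀c : IsCompact K₀) (hK₀ne : K₀.Nonempty)
    (hconv : Tendsto (fun i => Metric.hausdorffDist (K i) K₀) atTop (𝓝 0)) :
    limsup (fun i => bestConst F (K i)) atTop ≤ bestConst F K₀ := by
  refine ENNReal.le_of_forall_nnreal_lt fun r hr => ?_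
  have hfreq : ∃ᶠ i in atTop, (r : ℝ≥0∞) < bestConst F (K i) :=
    frequently_lt_of_lt_limsup (by isBoundedDefault) hr
  have := frequently_iff_neBot.1 hfreq
  obtain ⟨𝒰, h𝒰⟩ := exists_ultrafilter_le (atTop ⊓ 𝓟 {i | (r : ℝ≥0∞) < bestConst F (K i)})
  choose! ν hν using fun i (hi : (r : ℝ≥0∞) < bestConst F (K i)) =>
    exists_finiteMeasure_mass_eq_of_lt_bestConst hi
  have hν𝒰 : ∀ᶠ i in 𝒰, (ν i).mass = r ∧ (ν i : Measure X) (K i)ᶜ = 0 ∧ Phi F (ν i) ≤ 1 :=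
    Eventually.mono ((h𝒰.trans inf_le_right) (mem_principal_self _)) hν
  obtain ⟨μ, hμ⟩ := FiniteMeasure.exists_tendsto_of_eventually_mass_le 𝒰
    (hν𝒰.mono fun i hi => hi.1.le)
  have hmass : μ.mass = r :=
    tendsto_nhds_unique hμ.mass (tendsto_const_nhds.congr' (hν𝒰.mono fun i hi => hi.1.symm))
  have hΦ : Phi F μ ≤ 1 := phi_le_one_iff.2 fun f hf =>
    le_of_tendsto (FiniteMeasure.tendsto_integral_of_tendsto hμ f)
      (hν𝒰.mono fun i hi => phi_le_one_iff.1 hi.2.2 f hf)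
  have hsupp : (μ : Measure X) K₀ᶜ = 0 :=
    FiniteMeasure.measure_compl_eq_zero_of_tendsto_hausdorffDist hKne hK₀c.isClosed hK₀ne
      (hconv.mono_left (h𝒰.trans inf_le_left)) hμ (hν𝒰.mono fun i hi => ⟨hi.1.le, hi.2.1⟩)
  calc (r : ℝ≥0∞) = (μ : Measure X) univ := by rw [← hmass, FiniteMeasure.ennreal_mass]
    _ ≤ bestConst F K₀ := measure_univ_le_bestConst _ hsupp hΦ

theorem stmt_5 {X : Type*} [MetricSpace X] [CompactSpace X]
    [MeasurableSpace X] [BorelSpace X]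
    (F : Set C(X, ℝ)) (hF : F.Nonempty) (hFneg : ∀ f ∈ F, -f ∈ F)
    (K : ℕ → Set X) (K₀ : Set X)
    (hKc : ∀ i, IsCompact (K i)) (hKne : ∀ i, (K i).Nonempty)
    (hK₀c : IsCompact K₀) (hK₀ne : K₀.Nonempty)
    (hconv : Tendsto (fun i => Metric.hausdorffDist (K i) K₀) atTop (𝓝 0)) :
    limsup (fun i => bestConst F (K i)) atTop ≤ bestConst F K₀ :=
  stmt_5_general F K K₀ hKne hK₀c hK₀ne hconv
end

section
/- Let d ≥ 1, let L > 0 and r > 0, and let γ : [0, L] → ℝ^d be a C^2 curve parametrized by arclength (‖γ'(t)‖ = 1 for all t ∈ [0, L]) whose image is contained in the closed ball of radius r centered at the origin (‖γ(t)‖ ≤ r for all t ∈ [0, L]). Then L ≤ r · (2 + ∫_0^L ‖γ''(t)‖ dt). -/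
/-!
Testing the position vector field `x ↦ x` against the curve: `⟪γ, γ'⟫' = ‖γ'‖² + ⟪γ, γ''⟫`,
and `‖γ'‖² = 1` is the tangential divergence of the position field. Integrating over `[0, L]`
gives `L = ⟪γ, γ'⟫ |₀ᴸ - ∫ ⟪γ, γ''⟫`; the boundary terms are each at most `r` and the
integral at most `r ∫ ‖γ''‖` by Cauchy–Schwarz and `‖γ‖ ≤ r`.
-/

open MeasureTheory Filter Set
open scoped Topology RealInnerProductSpace

section

variable {E : Type*} [NormedAddCommGroup E] [InnerProductSpace ℝ E]

theorem integral_norm_deriv_sq_eq {a b : ℝ} (hab : a ≤ b) {γ γ' γ'' : ℝ → E}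
    (hγ' : ∀ t ∈ Icc a b, HasDerivWithinAt γ (γ' t) (Icc a b) t)
    (hγ'' : ∀ t ∈ Icc a b, HasDerivWithinAt γ' (γ'' t) (Icc a b) t)
    (hcont : ContinuousOn γ'' (Icc a b)) :
    ∫ t in a..b, ‖γ' t‖ ^ 2 = ⟪γ b, γ' b⟫ - ⟪γ a, γ' a⟫ - ∫ t in a..b, ⟪γ t, γ'' t⟫ := by
  have hγ_cont : ContinuousOn γ (Icc a b) := fun t ht => (hγ' t ht).continuousWithinAt
  have hγ'_cont : ContinuousOn γ' (Icc a b) := fun t ht => (hγ'' t ht).continuousWithinAt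
  have hsq_int : IntervalIntegrable (fun t => ‖γ' t‖ ^ 2) volume a b :=
    (hγ'_cont.norm.pow 2).intervalIntegrable_of_Icc hab
  have hinner_int : IntervalIntegrable (fun t => ⟪γ t, γ'' t⟫) volume a b :=
    (hγ_cont.inner hcont).intervalIntegrable_of_Icc hab
  have hftc : ∫ t in a..b, (‖γ' t‖ ^ 2 + ⟪γ t, γ'' t⟫) = ⟪γ b, γ' b⟫ - ⟪γ a, γ' a⟫ := by
    refine intervalIntegral.integral_eq_sub_of_hasDeriv_right_of_le hab
      (hγ_cont.inner hγ'_cont) (fun t ht => ?_) (hsq_int.add hinner_int)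
    have ht' : t ∈ Icc a b := Ioo_subset_Icc_self ht
    have hderiv := (hγ' t ht').inner ℝ (hγ'' t ht')
    rw [real_inner_self_eq_norm_sq, add_comm] at hderiv
    exact hderiv.mono_of_mem_nhdsWithin (Icc_mem_nhdsGT_of_mem ⟨ht.1.le, ht.2⟩)
  rw [← hftc, intervalIntegral.integral_add hsq_int hinner_int]
  ring

theorem abs_integral_inner_le {a b r : ℝ} (hab : a ≤ b) {f g : ℝ → E}
    (hf : ∀ t ∈ Icc a b, ‖f t‖ ≤ r) (hg : IntervalIntegrable (fun t => ‖g t‖) volume a b) :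
    |∫ t in a..b, ⟪f t, g t⟫| ≤ r * ∫ t in a..b, ‖g t‖ := by
  rw [← intervalIntegral.integral_const_mul, ← Real.norm_eq_abs]
  refine intervalIntegral.norm_integral_le_of_norm_le hab
    (Eventually.of_forall fun t ht => ?_) (hg.const_mul r)
  calc ‖⟪f t, g t⟫‖ ≤ ‖f t‖ * ‖g t‖ := norm_inner_le_norm _ _
    _ ≤ r * ‖g t‖ := by gcongr; exact hf t (Ioc_subset_Icc_self ht)

end

theorem stmt_6_general (d : ℕ) (L r : ℝ) (hL : 0 < L)
    (γ γ' γ'' : ℝ → EuclideanSpace ℝ (Fin d))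
    (hγ' : ∀ t ∈ Icc (0 : ℝ) L, HasDerivWithinAt γ (γ' t) (Icc (0 : ℝ) L) t)
    (hγ'' : ∀ t ∈ Icc (0 : ℝ) L, HasDerivWithinAt γ' (γ'' t) (Icc (0 : ℝ) L) t)
    (hcont : ContinuousOn γ'' (Icc (0 : ℝ) L))
    (harc : ∀ t ∈ Icc (0 : ℝ) L, ‖γ' t‖ = 1)
    (hball : ∀ t ∈ Icc (0 : ℝ) L, ‖γ t‖ ≤ r) :
    L ≤ r * (2 + ∫ t in (0 : ℝ)..L, ‖γ'' t‖) := by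
  have hlength : ∫ t in (0 : ℝ)..L, ‖γ' t‖ ^ 2 = L := by
    rw [intervalIntegral.integral_congr (g := fun _ => (1 : ℝ)) fun t ht => by
      rw [uIcc_of_le hL.le] at ht; rw [harc t ht, one_pow]]
    simp
  have hboundary : ∀ t ∈ Icc (0 : ℝ) L, |⟪γ t, γ' t⟫| ≤ r := fun t ht =>
    (abs_real_inner_le_norm _ _).trans (by rw [harc t ht, mul_one]; exact hball t ht)
  have hcurv := abs_integral_inner_le hL.le hball (hcont.norm.intervalIntegrable_of_Icc hL.le)
  rw [integral_norm_deriv_sq_eq hL.le hγ' hγ'' hcont] at hlength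
  linarith [abs_le.1 (hboundary 0 ⟨le_rfl, hL.le⟩), abs_le.1 (hboundary L ⟨hL.le, le_rfl⟩),
    abs_le.1 hcurv]

theorem stmt_6 (d : ℕ) (hd : 1 ≤ d) (L r : ℝ) (hL : 0 < L) (hr : 0 < r)
    (γ γ' γ'' : ℝ → EuclideanSpace ℝ (Fin d))
    (hγ' : ∀ t ∈ Icc (0 : ℝ) L, HasDerivWithinAt γ (γ' t) (Icc (0 : ℝ) L) t)
    (hγ'' : ∀ t ∈ Icc (0 : ℝ) L, HasDerivWithinAt γ' (γ'' t) (Icc (0 : ℝ) L) t)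
    (hcont : ContinuousOn γ'' (Icc (0 : ℝ) L))
    (harc : ∀ t ∈ Icc (0 : ℝ) L, ‖γ' t‖ = 1)
    (hball : ∀ t ∈ Icc (0 : ℝ) L, ‖γ t‖ ≤ r) :
    L ≤ r * (2 + ∫ t in (0 : ℝ)..L, ‖γ'' t‖) :=
  stmt_6_general d L r hL γ γ' γ'' hγ' hγ'' hcont harc hball
end

section
/- Let d ≥ 1, let L > 0 and r > 0, and let γ : [0, L] → ℝ^d be a C^2 closed curve parametrized by arclength, i.e. ‖γ'(t)‖ = 1 for all t ∈ [0, L], γ(0) = γ(L), and γ'(0) = γ'(L), whose image is contained in the closed ball of radius r centered at the origin (‖γ(t)‖ ≤ r for all t ∈ [0, L]). Then L ≤ r · ∫_0^L ‖γ''(t)‖ dt. In particular, there is no closed C^2 curve in ℝ^d with vanishing curvature vector (γ'' ≡ 0). -/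
open MeasureTheory Filter Set
open scoped Topology

/-! Integrating `d/dt ⟪γ, γ'⟫ = ⟪γ, γ''⟫ + ‖γ'‖²` over a closed unit-speed curve, the boundary
terms cancel and `‖γ'‖² = 1`, so the length equals `-∫ ⟪γ, γ''⟫`, which Cauchy–Schwarz bounds by
`r ∫ ‖γ''‖` when `‖γ‖ ≤ r`. A curve with `γ'' ≡ 0` would thus have length at most `0`. -/

section ClosedCurve

variable {E : Type*} [NormedAddCommGroup E] [InnerProductSpace ℝ E]
  {a b : ℝ} {γ γ' γ'' : ℝ → E}

theorem integral_inner_add_norm_sq_eq_sub (hab : a ≤ b)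
    (hγ' : ∀ t ∈ Icc a b, HasDerivWithinAt γ (γ' t) (Icc a b) t)
    (hγ'' : ∀ t ∈ Icc a b, HasDerivWithinAt γ' (γ'' t) (Icc a b) t)
    (hcont : ContinuousOn γ'' (Icc a b)) :
    ∫ t in a..b, (inner ℝ (γ t) (γ'' t) + ‖γ' t‖ ^ 2) =
      inner ℝ (γ b) (γ' b) - inner ℝ (γ a) (γ' a) := by
  have hγc : ContinuousOn γ (Icc a b) := fun t ht => (hγ' t ht).continuousWithinAt
  have hγ'c : ContinuousOn γ' (Icc a b) := fun t ht => (hγ'' t ht).continuousWithinAt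
  refine intervalIntegral.integral_eq_sub_of_hasDerivAt_of_le hab (hγc.inner hγ'c)
    (fun t ht => ?_)
    ((hγc.inner hcont).add (hγ'c.norm.pow 2) |>.intervalIntegrable_of_Icc hab)
  have ht' : t ∈ Icc a b := Ioo_subset_Icc_self ht
  have hderiv := ((hγ' t ht').inner ℝ (hγ'' t ht')).hasDerivAt (Icc_mem_nhds ht.1 ht.2)
  rw [real_inner_self_eq_norm_sq] at hderiv
  exact hderiv

theorem integral_neg_inner_eq_sub_of_closed_unit_speed (hab : a ≤ b)
    (hγ' : ∀ t ∈ Icc a b, HasDerivWithinAt γ (γ' t) (Icc a b) t)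
    (hγ'' : ∀ t ∈ Icc a b, HasDerivWithinAt γ' (γ'' t) (Icc a b) t)
    (hcont : ContinuousOn γ'' (Icc a b)) (harc : ∀ t ∈ Icc a b, ‖γ' t‖ = 1)
    (hclosed : γ a = γ b) (hclosed' : γ' a = γ' b) :
    ∫ t in a..b, -inner ℝ (γ t) (γ'' t) = b - a := by
  have hγc : ContinuousOn γ (Icc a b) := fun t ht => (hγ' t ht).continuousWithinAt
  have hunit : ∫ t in a..b, (inner ℝ (γ t) (γ'' t) + ‖γ' t‖ ^ 2) =
      ∫ t in a..b, (inner ℝ (γ t) (γ'' t) + 1) :=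
    intervalIntegral.integral_congr fun t ht => by rw [uIcc_of_le hab] at ht; simp [harc t ht]
  have hparts := integral_inner_add_norm_sq_eq_sub hab hγ' hγ'' hcont
  rw [hunit, intervalIntegral.integral_add ((hγc.inner hcont).intervalIntegrable_of_Icc hab)
    intervalIntegrable_const, hclosed, hclosed', sub_self] at hparts
  rw [intervalIntegral.integral_neg]
  simp only [intervalIntegral.integral_const, smul_eq_mul, mul_one] at hparts
  linarith

theorem sub_le_mul_integral_norm_of_closed_unit_speed (hab : a ≤ b) {r : ℝ}
    (hγ' : ∀ t ∈ Icc a b, HasDerivWithinAt γ (γ' t) (Icc a b) t)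
    (hγ'' : ∀ t ∈ Icc a b, HasDerivWithinAt γ' (γ'' t) (Icc a b) t)
    (hcont : ContinuousOn γ'' (Icc a b)) (harc : ∀ t ∈ Icc a b, ‖γ' t‖ = 1)
    (hclosed : γ a = γ b) (hclosed' : γ' a = γ' b) (hball : ∀ t ∈ Icc a b, ‖γ t‖ ≤ r) :
    b - a ≤ r * ∫ t in a..b, ‖γ'' t‖ := by
  have hγc : ContinuousOn γ (Icc a b) := fun t ht => (hγ' t ht).continuousWithinAt
  calc b - a = ∫ t in a..b, -inner ℝ (γ t) (γ'' t) :=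
        (integral_neg_inner_eq_sub_of_closed_unit_speed hab hγ' hγ'' hcont harc hclosed hclosed').symm
    _ ≤ ∫ t in a..b, r * ‖γ'' t‖ := by
        refine intervalIntegral.integral_mono_on hab
          ((hγc.inner hcont).intervalIntegrable_of_Icc hab).neg
          ((hcont.norm.intervalIntegrable_of_Icc hab).const_mul r) fun t ht => ?_
        calc -inner ℝ (γ t) (γ'' t) ≤ ‖γ t‖ * ‖γ'' t‖ :=
            (neg_le_abs _).trans (abs_real_inner_le_norm _ _)
          _ ≤ r * ‖γ'' t‖ := by gcongr; exact hball t ht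
    _ = r * ∫ t in a..b, ‖γ'' t‖ := intervalIntegral.integral_const_mul r _

end ClosedCurve

theorem stmt_7_general (d : ℕ) (L r : ℝ) (hL : 0 < L)
    (γ γ' γ'' : ℝ → EuclideanSpace ℝ (Fin d))
    (hγ' : ∀ t ∈ Icc (0 : ℝ) L, HasDerivWithinAt γ (γ' t) (Icc (0 : ℝ) L) t)
    (hγ'' : ∀ t ∈ Icc (0 : ℝ) L, HasDerivWithinAt γ' (γ'' t) (Icc (0 : ℝ) L) t)
    (hcont : ContinuousOn γ'' (Icc (0 : ℝ) L))
    (harc : ∀ t ∈ Icc (0 : ℝ) L, ‖γ' t‖ = 1)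
    (hclosed : γ 0 = γ L) (hclosed' : γ' 0 = γ' L)
    (hball : ∀ t ∈ Icc (0 : ℝ) L, ‖γ t‖ ≤ r) :
    L ≤ r * ∫ t in (0 : ℝ)..L, ‖γ'' t‖ ∧ ¬(∀ t ∈ Icc (0 : ℝ) L, γ'' t = 0) := by
  have hlength : L ≤ r * ∫ t in (0 : ℝ)..L, ‖γ'' t‖ := by
    simpa using sub_le_mul_integral_norm_of_closed_unit_speed hL.le hγ' hγ'' hcont harc
      hclosed hclosed' hball
  refine ⟨hlength, fun hflat => ?_⟩
  have hzero : ∫ t in (0 : ℝ)..L, ‖γ'' t‖ = 0 := by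
    rw [intervalIntegral.integral_congr (g := fun _ => (0 : ℝ))
      (fun t ht => by rw [uIcc_of_le hL.le] at ht; simp [hflat t ht]), intervalIntegral.integral_zero]
  rw [hzero, mul_zero] at hlength
  exact hlength.not_gt hL

theorem stmt_7 (d : ℕ) (hd : 1 ≤ d) (L r : ℝ) (hL : 0 < L) (hr : 0 < r)
    (γ γ' γ'' : ℝ → EuclideanSpace ℝ (Fin d))
    (hγ' : ∀ t ∈ Icc (0 : ℝ) L, HasDerivWithinAt γ (γ' t) (Icc (0 : ℝ) L) t)
    (hγ'' : ∀ t ∈ Icc (0 : ℝ) L, HasDerivWithinAt γ' (γ'' t) (Icc (0 : ℝ) L) t)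
    (hcont : ContinuousOn γ'' (Icc (0 : ℝ) L))
    (harc : ∀ t ∈ Icc (0 : ℝ) L, ‖γ' t‖ = 1)
    (hclosed : γ 0 = γ L) (hclosed' : γ' 0 = γ' L)
    (hball : ∀ t ∈ Icc (0 : ℝ) L, ‖γ t‖ ≤ r) :
    L ≤ r * ∫ t in (0 : ℝ)..L, ‖γ'' t‖ ∧ ¬(∀ t ∈ Icc (0 : ℝ) L, γ'' t = 0) :=
  stmt_7_general d L r hL γ γ' γ'' hγ' hγ'' hcont harc hclosed hclosed' hball
end
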